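/- arXiv:2512.19610 — 6 statements merged into one kernel-verified Lean document; each statement's English description precedes it below -/
import Mathlib

section
/- Let G and H be unital associative algebras over a field K, where H satisfies [x1, x2, x3] = 0 (all double commutators of H are central). Then for g1, g2, g3 ∈ G and h1, h2, h3 ∈ H, in G ⊗ H: [g1⊗h1, g2⊗h2, g3⊗h3] = [g1,g2,g3] ⊗ h1h2h3 + g3[g1,g2] ⊗ [h1h2, h3] + [g2g1, g3] ⊗ [h1,h2]h3. -/
open scoped TensorProduct

/-- The commutator `[a,b] = ab - ba` in a ring. -/
def rcomm {A : Type*} [Ring A] (a b : A) : A := a * b - b * a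

/-- If `H` satisfies `[x1, x2, x3] = 0`, then in `G ⊗ H`:
`[g1⊗h1, g2⊗h2, g3⊗h3] = [g1,g2,g3] ⊗ h1h2h3 + g3[g1,g2] ⊗ [h1h2, h3] + [g2g1, g3] ⊗ [h1,h2]h3`. -/
theorem stmt_3 (K : Type*) [Field K] (G H : Type*) [Ring G] [Ring H]
    [Algebra K G] [Algebra K H]
    (hH : ∀ x y z : H, rcomm (rcomm x y) z = 0)
    (g1 g2 g3 : G) (h1 h2 h3 : H) :
    rcomm (rcomm (g1 ⊗ₜ[K] h1) (g2 ⊗ₜ[K] h2)) (g3 ⊗ₜ[K] h3) =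
      (rcomm (rcomm g1 g2) g3) ⊗ₜ[K] (h1 * h2 * h3) +
        (g3 * rcomm g1 g2) ⊗ₜ[K] (rcomm (h1 * h2) h3) +
        (rcomm (g2 * g1) g3) ⊗ₜ[K] (rcomm h1 h2 * h3) := by
  have key : (h1 * h2 - h2 * h1) * h3 = h3 * (h1 * h2 - h2 * h1) := by
    have h := hH h1 h2 h3
    simp only [rcomm, sub_eq_zero] at h
    exact h
  have k : h1 * (h2 * h3) - h2 * (h1 * h3) = h3 * (h1 * h2) - h3 * (h2 * h1) := by
    rw [← mul_sub, ← key, sub_mul, mul_assoc, mul_assoc]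
  have k2 := sub_eq_sub_iff_add_eq_add.mp k
  have e : h3 * (h2 * h1) = h3 * (h1 * h2) + h2 * (h1 * h3) - h1 * (h2 * h3) := by
    rw [eq_sub_iff_add_eq, add_comm]
    exact k2
  simp only [rcomm, sub_mul, mul_sub, Algebra.TensorProduct.tmul_mul_tmul,
    TensorProduct.sub_tmul, TensorProduct.tmul_sub, mul_assoc, e,
    TensorProduct.tmul_add]
  abel
end

section
/- Let G and H be unital associative algebras over a field K such that G is Lie nilpotent (satisfies [x1,...,xp] = 0 for some p ≥ 3) and H satisfies [x1,x2,x3] = 0 and [x1,x2][x3,x4]···[x_{2k-1},x_{2k}] = 0 for some k ≥ 2. Then G ⊗ H is Lie nilpotent, i.e., satisfies [x1,...,xq] = 0 for some integer q ≥ p. -/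
open scoped TensorProduct

/-- The left-normed commutator `[a, l₀, l₁, ...]`. -/
def lnc {A : Type*} [Ring A] (a : A) (l : List A) : A := l.foldl rcomm a

/-- The algebra `A` satisfies the identity `[x_1, ..., x_q] = 0`. -/
def SatisfiesLieId (A : Type*) [Ring A] (q : ℕ) : Prop :=
  ∀ (a : A) (l : List A), l.length + 1 = q → lnc a l = 0

/-!
Let `T ⊆ H` be the set of commutators; the identity `[x,y,z] = 0` makes them central, and any
product of `k` of them vanishes. Filter `G ⊗ H` by the spans `V j m = lncTensorSpan K G H j m` of
the tensors `[g, g₁, …, g_m] ⊗ h t₁ ⋯ t_j` with `tᵢ ∈ T`. Since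
`[u ⊗ hP, g' ⊗ h'] = [u, g'] ⊗ hh'P + g'u ⊗ [h, h']P` for a central product `P`, bracketing
with an arbitrary element maps `V j m` into `V j (m+1) + V (j+1) 0`. As `V j (p-1) = 0` by the
identity of `G`, every `p - 1` brackets push `V j 0` into `V (j+1) 0`, and `V k 0 = 0`.
Hence `G ⊗ H` satisfies `[x₁, …, x_q] = 0` with `q = k(p-1) + 1`.
-/

section Commutator

variable {A : Type*} [Ring A]

lemma rcomm_zero_left (b : A) : rcomm 0 b = 0 := by simp [rcomm]

lemma rcomm_zero_right (a : A) : rcomm a 0 = 0 := by simp [rcomm]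

lemma rcomm_add_left (a a' b : A) : rcomm (a + a') b = rcomm a b + rcomm a' b := by
  simp only [rcomm, add_mul, mul_add]; abel

lemma rcomm_add_right (a b b' : A) : rcomm a (b + b') = rcomm a b + rcomm a b' := by
  simp only [rcomm, add_mul, mul_add]; abel

lemma rcomm_smul_left {K : Type*} [CommSemiring K] [Algebra K A] (c : K) (a b : A) :
    rcomm (c • a) b = c • rcomm a b := by
  simp [rcomm, smul_sub]

lemma rcomm_mul_left_of_commute {P : A} (hP : ∀ z, Commute P z) (h h' : A) :
    rcomm (h * P) h' = rcomm h h' * P := by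
  rw [rcomm, rcomm, sub_mul, (hP h').right_comm, mul_assoc h' h P]

lemma lnc_cons (a y : A) (l : List A) : lnc a (y :: l) = lnc (rcomm a y) l := rfl

lemma lnc_append (a : A) (l₁ l₂ : List A) : lnc a (l₁ ++ l₂) = lnc (lnc a l₁) l₂ :=
  List.foldl_append

lemma lnc_concat (a y : A) (l : List A) : lnc a (l ++ [y]) = rcomm (lnc a l) y := by
  rw [lnc_append]; rfl

lemma lnc_add (a b : A) (l : List A) : lnc (a + b) l = lnc a l + lnc b l := by
  induction l generalizing a b with
  | nil => rfl
  | cons y l ih => rw [lnc_cons, rcomm_add_left, ih, lnc_cons, lnc_cons]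

end Commutator

section CommutatorProducts

variable {H : Type*} [Ring H]

variable (H) in
def commutatorProducts (j : ℕ) : Set H :=
  {P | ∃ a b : Fin j → H, P = (List.ofFn fun i => rcomm (a i) (b i)).prod}

lemma one_mem_commutatorProducts_zero : (1 : H) ∈ commutatorProducts H 0 :=
  ⟨Fin.elim0, Fin.elim0, by simp⟩

lemma mem_commutatorProducts_succ_iff {j : ℕ} {P : H} :
    P ∈ commutatorProducts H (j + 1) ↔
      ∃ x y, ∃ P' ∈ commutatorProducts H j, P = rcomm x y * P' := by
  constructor
  · rintro ⟨a, b, rfl⟩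
    exact ⟨a 0, b 0, _, ⟨fun i => a i.succ, fun i => b i.succ, rfl⟩,
      by rw [List.ofFn_succ, List.prod_cons]⟩
  · rintro ⟨x, y, _, ⟨a, b, rfl⟩, rfl⟩
    exact ⟨Fin.cons x a, Fin.cons y b, by simp [List.ofFn_succ]⟩

lemma commute_of_mem_commutatorProducts (hH3 : ∀ x y z : H, rcomm (rcomm x y) z = 0)
    {j : ℕ} {P : H} (hP : P ∈ commutatorProducts H j) (z : H) : Commute P z := by
  obtain ⟨a, b, rfl⟩ := hP
  refine Commute.list_prod_left _ _ (List.forall_mem_ofFn_iff.mpr fun i => ?_)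
  exact sub_eq_zero.mp (hH3 (a i) (b i) z)

end CommutatorProducts

section TensorFiltration

variable (K : Type*) [Field K] (G H : Type*) [Ring G] [Ring H] [Algebra K G] [Algebra K H]

def lncTensorSpan (j m : ℕ) : Submodule K (G ⊗[K] H) :=
  Submodule.span K {x | ∃ (g : G) (lg : List G) (h P : H),
    lg.length = m ∧ P ∈ commutatorProducts H j ∧ x = lnc g lg ⊗ₜ[K] (h * P)}

variable {K G H}

lemma lnc_tmul_mem_lncTensorSpan {j : ℕ} (g : G) (lg : List G) (h : H) {P : H}
    (hP : P ∈ commutatorProducts H j) :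
    lnc g lg ⊗ₜ[K] (h * P) ∈ lncTensorSpan K G H j lg.length :=
  Submodule.subset_span ⟨g, lg, h, P, rfl, hP, rfl⟩

lemma lncTensorSpan_zero_zero_eq_top : lncTensorSpan K G H 0 0 = ⊤ := by
  rw [eq_top_iff, ← TensorProduct.span_tmul_eq_top, Submodule.span_le]
  rintro _ ⟨g, h, rfl⟩
  simpa [lnc] using lnc_tmul_mem_lncTensorSpan (K := K) g [] h one_mem_commutatorProducts_zero

lemma lncTensorSpan_le_zero (j m : ℕ) : lncTensorSpan K G H j m ≤ lncTensorSpan K G H j 0 := by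
  rw [lncTensorSpan, Submodule.span_le]
  rintro _ ⟨g, lg, h, P, -, hP, rfl⟩
  exact lnc_tmul_mem_lncTensorSpan (lnc g lg) [] h hP

lemma lncTensorSpan_succ_le (j : ℕ) :
    lncTensorSpan K G H (j + 1) 0 ≤ lncTensorSpan K G H j 0 := by
  rw [lncTensorSpan, Submodule.span_le]
  rintro _ ⟨g, lg, h, P, hl, hP, rfl⟩
  obtain ⟨x, y, P', hP', rfl⟩ := mem_commutatorProducts_succ_iff.mp hP
  rw [← mul_assoc, ← hl]
  exact lnc_tmul_mem_lncTensorSpan g lg (h * rcomm x y) hP'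

lemma lncTensorSpan_eq_bot_of_satisfiesLieId {m : ℕ} (hG : SatisfiesLieId G (m + 1)) (j : ℕ) :
    lncTensorSpan K G H j m = ⊥ := by
  rw [eq_bot_iff, lncTensorSpan, Submodule.span_le]
  rintro _ ⟨g, lg, h, P, hl, -, rfl⟩
  simp [hG g lg (by rw [hl])]

lemma lncTensorSpan_eq_bot_of_prod_rcomm_eq_zero {k : ℕ}
    (hHk : ∀ a b : Fin k → H, (List.ofFn fun i => rcomm (a i) (b i)).prod = 0) :
    lncTensorSpan K G H k 0 = ⊥ := by
  rw [eq_bot_iff, lncTensorSpan, Submodule.span_le]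
  rintro _ ⟨g, lg, h, P, -, ⟨a, b, rfl⟩, rfl⟩
  simp [hHk a b]

lemma rcomm_tmul_tmul (u g' : G) (h h' : H) :
    rcomm (u ⊗ₜ[K] h) (g' ⊗ₜ[K] h') =
      rcomm u g' ⊗ₜ[K] (h * h') + (g' * u) ⊗ₜ[K] rcomm h h' := by
  simp only [rcomm, Algebra.TensorProduct.tmul_mul_tmul, TensorProduct.sub_tmul,
    TensorProduct.tmul_sub]
  abel

variable (hH3 : ∀ x y z : H, rcomm (rcomm x y) z = 0)
include hH3

lemma rcomm_mem_lncTensorSpan_sup {j m : ℕ} {x : G ⊗[K] H} (hx : x ∈ lncTensorSpan K G H j m)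
    (y : G ⊗[K] H) :
    rcomm x y ∈ lncTensorSpan K G H j (m + 1) ⊔ lncTensorSpan K G H (j + 1) 0 := by
  induction hx using Submodule.span_induction generalizing y with
  | mem x hx =>
    obtain ⟨g, lg, h, P, rfl, hP, rfl⟩ := hx
    induction y using TensorProduct.induction_on with
    | zero => rw [rcomm_zero_right]; exact Submodule.zero_mem _
    | tmul g' h' =>
      have hPc := commute_of_mem_commutatorProducts hH3 hP
      rw [rcomm_tmul_tmul, (hPc h').right_comm, rcomm_mul_left_of_commute hPc, ← lnc_concat,
        ← one_mul (rcomm h h' * P)]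
      refine Submodule.add_mem _ (Submodule.mem_sup_left ?_) (Submodule.mem_sup_right ?_)
      · simpa using lnc_tmul_mem_lncTensorSpan g (lg ++ [g']) (h * h') hP
      · exact lnc_tmul_mem_lncTensorSpan (g' * lnc g lg) [] 1
          (mem_commutatorProducts_succ_iff.mpr ⟨h, h', P, hP, rfl⟩)
    | add y₁ y₂ hy₁ hy₂ => rw [rcomm_add_right]; exact Submodule.add_mem _ hy₁ hy₂
  | zero => rw [rcomm_zero_left]; exact Submodule.zero_mem _
  | add a b _ _ ha hb => rw [rcomm_add_left]; exact Submodule.add_mem _ (ha y) (hb y)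
  | smul c a _ ha => rw [rcomm_smul_left]; exact Submodule.smul_mem _ _ (ha y)

lemma lnc_mem_lncTensorSpan_zero {j : ℕ} {x : G ⊗[K] H} (hx : x ∈ lncTensorSpan K G H j 0)
    (l : List (G ⊗[K] H)) : lnc x l ∈ lncTensorSpan K G H j 0 := by
  induction l generalizing x with
  | nil => exact hx
  | cons y l ih =>
    have hle : lncTensorSpan K G H j (0 + 1) ⊔ lncTensorSpan K G H (j + 1) 0 ≤
        lncTensorSpan K G H j 0 :=
      sup_le (lncTensorSpan_le_zero j 1) (lncTensorSpan_succ_le j)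
    exact ih (hle (rcomm_mem_lncTensorSpan_sup hH3 hx y))

lemma lnc_mem_lncTensorSpan_sup {j m : ℕ} {x : G ⊗[K] H} (hx : x ∈ lncTensorSpan K G H j m)
    (l : List (G ⊗[K] H)) :
    lnc x l ∈ lncTensorSpan K G H j (m + l.length) ⊔ lncTensorSpan K G H (j + 1) 0 := by
  induction l generalizing m x with
  | nil => exact Submodule.mem_sup_left hx
  | cons y l ih =>
    obtain ⟨v, hv, w, hw, hvw⟩ := Submodule.mem_sup.mp (rcomm_mem_lncTensorSpan_sup hH3 hx y)
    rw [lnc_cons, ← hvw, lnc_add, List.length_cons, ← add_assoc, add_right_comm]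
    exact Submodule.add_mem _ (ih hv)
      (Submodule.mem_sup_right (lnc_mem_lncTensorSpan_zero hH3 hw l))

variable {m : ℕ} (hG : SatisfiesLieId G (m + 1))
include hG

lemma lnc_mem_lncTensorSpan_succ {j : ℕ} {x : G ⊗[K] H} (hx : x ∈ lncTensorSpan K G H j 0)
    {l : List (G ⊗[K] H)} (hl : l.length = m) : lnc x l ∈ lncTensorSpan K G H (j + 1) 0 := by
  simpa [hl, lncTensorSpan_eq_bot_of_satisfiesLieId hG] using lnc_mem_lncTensorSpan_sup hH3 hx l

lemma lnc_mem_lncTensorSpan_add {n j : ℕ} {x : G ⊗[K] H} (hx : x ∈ lncTensorSpan K G H j 0)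
    {l : List (G ⊗[K] H)} (hl : l.length = n * m) :
    lnc x l ∈ lncTensorSpan K G H (j + n) 0 := by
  induction n generalizing j x l with
  | zero =>
    rw [zero_mul, List.length_eq_zero_iff] at hl
    subst hl
    exact hx
  | succ n ih =>
    rw [← List.take_append_drop m l, lnc_append, ← add_assoc, add_right_comm]
    refine ih (lnc_mem_lncTensorSpan_succ hH3 hG hx ?_) ?_
    · rw [List.length_take, hl, Nat.succ_mul]; omega
    · rw [List.length_drop, hl, Nat.succ_mul]; omega

end TensorFiltration

/-- If `G` satisfies `[x1,...,xp] = 0` for some `p ≥ 3` and `H` satisfies `[x1,x2,x3] = 0` and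
`[x1,x2]⋯[x_{2k-1},x_{2k}] = 0` for some `k ≥ 2`, then `G ⊗ H` is Lie nilpotent:
it satisfies `[x1,...,xq] = 0` for some `q ≥ p`. -/
theorem stmt_5 (K : Type*) [Field K] (G H : Type*) [Ring G] [Ring H]
    [Algebra K G] [Algebra K H] (p k : ℕ) (hp : 3 ≤ p) (hk : 2 ≤ k)
    (hG : SatisfiesLieId G p)
    (hH3 : ∀ x y z : H, rcomm (rcomm x y) z = 0)
    (hHk : ∀ a b : Fin k → H, (List.ofFn fun i => rcomm (a i) (b i)).prod = 0) :
    ∃ q, p ≤ q ∧ SatisfiesLieId (TensorProduct K G H) q := by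
  obtain ⟨m, rfl⟩ : ∃ m, p = m + 1 := ⟨p - 1, by omega⟩
  refine ⟨k * m + 1, by nlinarith, fun a l hl => ?_⟩
  have ha : a ∈ lncTensorSpan K G H 0 0 := by
    rw [lncTensorSpan_zero_zero_eq_top]; exact Submodule.mem_top
  have hal := lnc_mem_lncTensorSpan_add hH3 hG ha (n := k) (l := l) (by omega)
  rwa [zero_add, lncTensorSpan_eq_bot_of_prod_rcomm_eq_zero hHk, Submodule.mem_bot] at hal
end

section
/- Let char K ≠ 2 and let G, H be unital K-algebras each satisfying [x1,x2,x3] = 0 and the identity [x1,x2][x3,x4]···[x_{2k+1},x_{2k+2}] = 0 (a product of k+1 double commutators). Then G ⊗ H satisfies the identity [x1,...,x_{2k+2}] = 0. -/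
/-!
Since `[[x, y], z] = 0`, commutators, and hence products of commutators, are central in `G` and
in `H`. Let `F n` be the span of the tensors `(C g) ⊗ (D h)` where `C` is a product of `i`
commutators of `G`, `D` a product of `j` commutators of `H`, and `i + j = n`. By centrality,
`[(C g) ⊗ (D h), g' ⊗ h'] = C [g, g'] ⊗ D h h' + C g' g ⊗ D [h, h']`, so bracketing with anything
maps `F n` into `F (n + 1)`. As `F 0` is the whole algebra, every commutator of length `2k + 2`
lies in `F (2k + 1)`, which vanishes because there `i ≥ k + 1` or `j ≥ k + 1`.
-/

open scoped TensorProduct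

section CommProd

variable {A : Type*} [Ring A]

inductive IsCommProd : ℕ → A → Prop
  | one : IsCommProd 0 1
  | mul_rcomm {i : ℕ} {C : A} (a b : A) : IsCommProd i C → IsCommProd (i + 1) (C * rcomm a b)

theorem IsCommProd.exists_eq_prod_ofFn {i : ℕ} {C : A} (hC : IsCommProd i C) :
    ∃ a b : Fin i → A, C = (List.ofFn fun n => rcomm (a n) (b n)).prod := by
  induction hC with
  | one => exact ⟨Fin.elim0, Fin.elim0, rfl⟩
  | mul_rcomm a' b' _ ih =>
    obtain ⟨a, b, rfl⟩ := ih
    refine ⟨Fin.snoc a a', Fin.snoc b b', ?_⟩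
    rw [List.ofFn_succ', List.prod_concat]
    simp only [Fin.snoc_castSucc, Fin.snoc_last]

theorem IsCommProd.eq_zero {k : ℕ}
    (hk : ∀ a b : Fin (k + 1) → A, (List.ofFn fun i => rcomm (a i) (b i)).prod = 0)
    {i : ℕ} {C : A} (hi : k + 1 ≤ i) (hC : IsCommProd i C) : C = 0 := by
  induction hC with
  | one => omega
  | @mul_rcomm i C a b hC ih =>
    rcases Nat.lt_or_ge k i with hki | hki
    · rw [ih hki, zero_mul]
    · obtain rfl : i = k := by omega
      obtain ⟨a', b', hab⟩ := (hC.mul_rcomm a b).exists_eq_prod_ofFn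
      rw [hab, hk a' b']

theorem commute_rcomm (h3 : ∀ x y z : A, rcomm (rcomm x y) z = 0) (a b t : A) :
    Commute (rcomm a b) t :=
  sub_eq_zero.mp (h3 a b t)

theorem IsCommProd.commute (h3 : ∀ x y z : A, rcomm (rcomm x y) z = 0) {i : ℕ} {C : A}
    (hC : IsCommProd i C) (t : A) : Commute C t := by
  induction hC with
  | one => exact Commute.one_left t
  | mul_rcomm a b _ ih => exact ih.mul_left (commute_rcomm h3 a b t)

end CommProd

section Filtration

variable (R : Type*) [CommSemiring R] (G H : Type*) [Ring G] [Ring H] [Algebra R G] [Algebra R H]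

def rcommBilin (A : Type*) [Ring A] [Algebra R A] : A →ₗ[R] A →ₗ[R] A :=
  LinearMap.mul R A - (LinearMap.mul R A).flip

def commFiltration (n : ℕ) : Submodule R (G ⊗[R] H) :=
  Submodule.span R { t | ∃ (i j : ℕ) (C g : G) (D h : H), i + j = n ∧ IsCommProd i C ∧
    IsCommProd j D ∧ t = (C * g) ⊗ₜ[R] (D * h) }

variable {R G H}

theorem commFiltration_zero : commFiltration R G H 0 = ⊤ := by
  rw [eq_top_iff, ← TensorProduct.span_tmul_eq_top]
  refine Submodule.span_mono ?_
  rintro _ ⟨g, h, rfl⟩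
  exact ⟨0, 0, 1, g, 1, h, rfl, .one, .one, by simp only [one_mul]⟩

theorem commFiltration_eq_bot {k : ℕ}
    (hGk : ∀ a b : Fin (k + 1) → G, (List.ofFn fun i => rcomm (a i) (b i)).prod = 0)
    (hHk : ∀ a b : Fin (k + 1) → H, (List.ofFn fun i => rcomm (a i) (b i)).prod = 0) :
    commFiltration R G H (2 * k + 1) = ⊥ := by
  rw [eq_bot_iff, commFiltration, Submodule.span_le]
  rintro _ ⟨i, j, C, g, D, h, hij, hC, hD, rfl⟩
  rcases (by omega : k + 1 ≤ i ∨ k + 1 ≤ j) with hi | hj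
  · simp [hC.eq_zero hGk hi]
  · simp [hD.eq_zero hHk hj]

theorem rcomm_tmul_mem_commFiltration_succ
    (hG3 : ∀ x y z : G, rcomm (rcomm x y) z = 0) (hH3 : ∀ x y z : H, rcomm (rcomm x y) z = 0)
    {i j : ℕ} {C : G} {D : H} (hC : IsCommProd i C) (hD : IsCommProd j D) (g g' : G) (h h' : H) :
    rcomm ((C * g) ⊗ₜ[R] (D * h)) (g' ⊗ₜ[R] h') ∈ commFiltration R G H (i + j + 1) := by
  have hCg : g' * (C * g) = C * (g' * g) := by
    rw [← mul_assoc, ← (hC.commute hG3 g').eq, mul_assoc]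
  have hDh : h' * (D * h) = D * (h' * h) := by
    rw [← mul_assoc, ← (hD.commute hH3 h').eq, mul_assoc]
  have expand : rcomm ((C * g) ⊗ₜ[R] (D * h)) (g' ⊗ₜ[R] h')
      = (C * rcomm g g' * 1) ⊗ₜ[R] (D * (h * h'))
        + (C * (g' * g)) ⊗ₜ[R] (D * rcomm h h' * 1) := by
    simp only [rcomm, Algebra.TensorProduct.tmul_mul_tmul, mul_one, mul_sub,
      TensorProduct.tmul_sub, TensorProduct.sub_tmul, hCg, hDh, mul_assoc]
    abel
  rw [expand]
  exact add_mem
    (Submodule.subset_span ⟨i + 1, j, _, 1, D, h * h', by omega, hC.mul_rcomm g g', hD, rfl⟩)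
    (Submodule.subset_span ⟨i, j + 1, C, g' * g, _, 1, by omega, hC, hD.mul_rcomm h h', rfl⟩)

theorem rcomm_mem_commFiltration_succ
    (hG3 : ∀ x y z : G, rcomm (rcomm x y) z = 0) (hH3 : ∀ x y z : H, rcomm (rcomm x y) z = 0)
    {n : ℕ} {x : G ⊗[R] H} (hx : x ∈ commFiltration R G H n) (u : G ⊗[R] H) :
    rcomm x u ∈ commFiltration R G H (n + 1) := by
  have hu : u ∈ Submodule.span R { t : G ⊗[R] H | ∃ g h, g ⊗ₜ h = t } := by
    rw [TensorProduct.span_tmul_eq_top]; trivial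
  have := Submodule.apply_mem_map₂ (rcommBilin R (G ⊗[R] H)) hx hu
  rw [commFiltration, Submodule.map₂_span_span] at this
  refine Submodule.span_le.mpr ?_ this
  rintro _ ⟨_, ⟨i, j, C, g, D, h, rfl, hC, hD, rfl⟩, _, ⟨g', h', rfl⟩, rfl⟩
  exact rcomm_tmul_mem_commFiltration_succ hG3 hH3 hC hD g g' h h'

theorem lnc_mem_commFiltration
    (hG3 : ∀ x y z : G, rcomm (rcomm x y) z = 0) (hH3 : ∀ x y z : H, rcomm (rcomm x y) z = 0)
    (l : List (G ⊗[R] H)) {n : ℕ} {x : G ⊗[R] H} (hx : x ∈ commFiltration R G H n) :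
    lnc x l ∈ commFiltration R G H (n + l.length) := by
  induction l generalizing x n with
  | nil => exact hx
  | cons u l ih =>
    rw [List.length_cons, ← add_assoc, add_right_comm]
    exact ih (rcomm_mem_commFiltration_succ hG3 hH3 hx u)

end Filtration

theorem stmt_8_general (K : Type*) [Field K]
    (G H : Type*) [Ring G] [Ring H] [Algebra K G] [Algebra K H]
    (k : ℕ)
    (hG3 : ∀ x y z : G, rcomm (rcomm x y) z = 0)
    (hGk : ∀ a b : Fin (k + 1) → G, (List.ofFn fun i => rcomm (a i) (b i)).prod = 0)
    (hH3 : ∀ x y z : H, rcomm (rcomm x y) z = 0)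
    (hHk : ∀ a b : Fin (k + 1) → H, (List.ofFn fun i => rcomm (a i) (b i)).prod = 0) :
    SatisfiesLieId (TensorProduct K G H) (2 * k + 2) := by
  intro a l hl
  have ha : a ∈ commFiltration K G H 0 := by rw [commFiltration_zero]; trivial
  have hmem := lnc_mem_commFiltration hG3 hH3 l ha
  rwa [show 0 + l.length = 2 * k + 1 by omega, commFiltration_eq_bot hGk hHk,
    Submodule.mem_bot] at hmem

/-- Over a field of characteristic `≠ 2`, if `G` and `H` each satisfy `[x1,x2,x3] = 0` and
`[x1,x2][x3,x4]⋯[x_{2k+1},x_{2k+2}] = 0` (a product of `k+1` double commutators), then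
`G ⊗ H` satisfies `[x1,...,x_{2k+2}] = 0`. -/
theorem stmt_8 (K : Type*) [Field K] (hchar : ringChar K ≠ 2)
    (G H : Type*) [Ring G] [Ring H] [Algebra K G] [Algebra K H]
    (k : ℕ) (hk : 1 ≤ k)
    (hG3 : ∀ x y z : G, rcomm (rcomm x y) z = 0)
    (hGk : ∀ a b : Fin (k + 1) → G, (List.ofFn fun i => rcomm (a i) (b i)).prod = 0)
    (hH3 : ∀ x y z : H, rcomm (rcomm x y) z = 0)
    (hHk : ∀ a b : Fin (k + 1) → H, (List.ofFn fun i => rcomm (a i) (b i)).prod = 0) :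
    SatisfiesLieId (TensorProduct K G H) (2 * k + 2) :=
  stmt_8_general K G H k hG3 hGk hH3 hHk
end

section
/- Let char K ≠ 2 and let E_{2k} be the Grassmann (exterior) algebra on a 2k-dimensional K-vector space with generators e_1,...,e_{2k} (first copy) and f_1,...,f_{2k} (second copy). Then in E_{2k} ⊗ E_{2k}, the left-normed commutator [e_1⊗1, e_2⊗f_1, e_3⊗f_2, ..., e_{2k}⊗f_{2k-1}, 1⊗f_{2k}] equals 2^{2k} · e_1···e_{2k} ⊗ f_1···f_{2k}, which is nonzero. Hence E_{2k} ⊗ E_{2k} does not satisfy [x1,...,x_{2k+1}] = 0. -/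
set_option maxHeartbeats 2000000


open scoped TensorProduct

private lemma ι_mul_listProd {R M : Type*} [CommRing R] [AddCommGroup M] [Module R M]
    (m : M) (l : List M) :
    ExteriorAlgebra.ι R m * (l.map (ExteriorAlgebra.ι R)).prod
      = ((-1 : R) ^ l.length) • ((l.map (ExteriorAlgebra.ι R)).prod * ExteriorAlgebra.ι R m) := by
  induction l with
  | nil => simp
  | cons y t ih =>
    have h1 : ExteriorAlgebra.ι R m * ExteriorAlgebra.ι R y
        = -(ExteriorAlgebra.ι R y * ExteriorAlgebra.ι R m) :=
      eq_neg_of_add_eq_zero_left (ExteriorAlgebra.ι_add_mul_swap m y)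
    simp only [List.map_cons, List.prod_cons, List.length_cons]
    rw [← mul_assoc, h1, neg_mul, mul_assoc, ih, mul_smul_comm, pow_succ, mul_neg_one,
      neg_smul, mul_assoc]

/-- In `E_{2k} ⊗ E_{2k}` (char K ≠ 2), the left-normed commutator
`[e_1⊗1, e_2⊗f_1, ..., e_{2k}⊗f_{2k-1}, 1⊗f_{2k}]` equals
`2^{2k} · e_1⋯e_{2k} ⊗ f_1⋯f_{2k}`, which is nonzero; hence `E_{2k} ⊗ E_{2k}` does not
satisfy `[x_1, ..., x_{2k+1}] = 0`. -/
theorem stmt_9 (K : Type*) [Field K] (hchar : ringChar K ≠ 2) (k : ℕ) (hk : 0 < k) :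
    let E := ExteriorAlgebra K (Fin (2 * k) → K)
    let e : Fin (2 * k) → E := fun i => ExteriorAlgebra.ι K (Pi.single i 1)
    let x : Fin (2 * k + 1) → TensorProduct K E E := fun j =>
      if _h0 : (j : ℕ) = 0 then (e ⟨0, by omega⟩) ⊗ₜ[K] (1 : E)
      else if _hl : (j : ℕ) = 2 * k then (1 : E) ⊗ₜ[K] (e ⟨2 * k - 1, by omega⟩)
      else (e ⟨(j : ℕ), by have := j.isLt; omega⟩) ⊗ₜ[K] (e ⟨(j : ℕ) - 1, by have := j.isLt; omega⟩)
    lnc (x 0) (List.ofFn fun i : Fin (2 * k) => x i.succ) =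
        ((2 : K) ^ (2 * k)) • ((List.ofFn e).prod ⊗ₜ[K] (List.ofFn e).prod) ∧
      lnc (x 0) (List.ofFn fun i : Fin (2 * k) => x i.succ) ≠ 0 ∧
      ¬ SatisfiesLieId (TensorProduct K E E) (2 * k + 1) := by
  intro E e x
  have hk2 : 0 < 2 * k := by omega
  set g : ℕ → (Fin (2 * k) → K) := fun i => Pi.single ⟨i % (2 * k), Nat.mod_lt i hk2⟩ 1 with hg
  have hgi : ∀ (i : ℕ) (h : i < 2 * k), e ⟨i, h⟩ = ExteriorAlgebra.ι K (g i) := by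
    intro i h
    have : (⟨i % (2 * k), Nat.mod_lt i hk2⟩ : Fin (2 * k)) = ⟨i, h⟩ :=
      Fin.ext (Nat.mod_eq_of_lt h)
    simp only [hg, e, this]
  set P : ℕ → E := fun m => (((List.range m).map g).map (ExteriorAlgebra.ι K)).prod with hP
  have hPsucc : ∀ m, P (m + 1) = P m * ExteriorAlgebra.ι K (g m) := by
    intro m
    simp [hP, List.range_succ]
  have hcomm : ∀ (v : Fin (2 * k) → K) (m : ℕ),
      ExteriorAlgebra.ι K v * P m = ((-1 : K) ^ m) • (P m * ExteriorAlgebra.ι K v) := by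
    intro v m
    simpa [hP] using ι_mul_listProd (R := K) v ((List.range m).map g)
  set w : ℕ → TensorProduct K E E := fun i =>
    if i = 0 then (ExteriorAlgebra.ι K (g 0)) ⊗ₜ[K] (1 : E)
    else if i = 2 * k then (1 : E) ⊗ₜ[K] (ExteriorAlgebra.ι K (g (2 * k - 1)))
    else (ExteriorAlgebra.ι K (g i)) ⊗ₜ[K] (ExteriorAlgebra.ι K (g (i - 1))) with hw
  have hxw : ∀ j : Fin (2 * k + 1), x j = w (j : ℕ) := by
    intro j
    simp only [x, hw]
    by_cases h0 : (j : ℕ) = 0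
    · simp [h0, hgi]
    · by_cases hl : (j : ℕ) = 2 * k
      · simp [h0, hl, hgi]
      · simp [h0, hl, hgi]
  have hlist : (List.ofFn fun i : Fin (2 * k) => x i.succ)
      = (List.range (2 * k)).map (fun i => w (i + 1)) := by
    apply List.ext_getElem
    · simp
    · intro i h1 h2
      simp only [List.getElem_ofFn, List.getElem_map, List.getElem_range]
      rw [hxw]
      simp [Fin.val_succ]
  have key : ∀ j, j < 2 * k →
      List.foldl rcomm (w 0) ((List.range j).map (fun i => w (i + 1)))
        = ((2 : K) ^ j) • (P (j + 1) ⊗ₜ[K] P j) := by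
    intro j
    induction j with
    | zero =>
      intro _
      simp [hw, hP, List.range_succ]
    | succ j ih =>
      intro hj
      rw [List.range_succ, List.map_append, List.foldl_append, ih (by omega)]
      simp only [List.map_cons, List.map_nil, List.foldl_cons, List.foldl_nil]
      have hw1 : w (j + 1)
          = (ExteriorAlgebra.ι K (g (j + 1))) ⊗ₜ[K] (ExteriorAlgebra.ι K (g j)) := by
        simp only [hw]
        rw [if_neg (by omega), if_neg (by omega)]
        simp
      rw [hw1, rcomm, smul_mul_assoc, mul_smul_comm, Algebra.TensorProduct.tmul_mul_tmul,
        Algebra.TensorProduct.tmul_mul_tmul, hcomm (g (j + 1)) (j + 1), hcomm (g j) j,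
        ← hPsucc (j + 1), ← hPsucc j]
      simp only [← TensorProduct.smul_tmul', TensorProduct.tmul_smul, smul_smul]
      have hsq : ((-1 : K) ^ j) * ((-1 : K) ^ j) = 1 := by
        rw [← pow_add]; exact Even.neg_one_pow ⟨j, rfl⟩
      match_scalars
      linear_combination (2 : K) ^ j * hsq
  have h2k1 : 2 * k = (2 * k - 1) + 1 := by omega
  have main : lnc (x 0) (List.ofFn fun i : Fin (2 * k) => x i.succ)
      = ((2 : K) ^ (2 * k)) • (P (2 * k) ⊗ₜ[K] P (2 * k)) := by
    have hx0 : x 0 = w 0 := by simpa using hxw 0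
    rw [lnc, hlist, hx0]
    have hsplit : List.range (2 * k) = List.range (2 * k - 1) ++ [2 * k - 1] := by
      conv_lhs => rw [h2k1]
      rw [List.range_succ]
    rw [hsplit]
    rw [List.map_append, List.foldl_append, key (2 * k - 1) (by omega)]
    simp only [List.map_cons, List.map_nil, List.foldl_cons, List.foldl_nil]
    have hwlast : w ((2 * k - 1) + 1)
        = (1 : E) ⊗ₜ[K] (ExteriorAlgebra.ι K (g (2 * k - 1))) := by
      simp only [hw]
      rw [if_neg (by omega), if_pos (by omega)]
    rw [hwlast, rcomm, smul_mul_assoc, mul_smul_comm, Algebra.TensorProduct.tmul_mul_tmul,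
      Algebra.TensorProduct.tmul_mul_tmul, hcomm (g (2 * k - 1)) (2 * k - 1),
      mul_one, one_mul, ← hPsucc (2 * k - 1), ← h2k1]
    simp only [← TensorProduct.smul_tmul', TensorProduct.tmul_smul, smul_smul]
    have hsign : (-1 : K) ^ (2 * k - 1) = -1 := Odd.neg_one_pow ⟨k - 1, by omega⟩
    have hexp : (2 : K) ^ (2 * k) = 2 ^ (2 * k - 1) * 2 := by rw [← pow_succ, ← h2k1]
    rw [hsign]
    match_scalars
    linear_combination -hexp
  have hprod : (List.ofFn e).prod = P (2 * k) := by
    simp only [hP]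
    congr 1
    apply List.ext_getElem
    · simp
    · intro i h1 h2
      simp only [List.getElem_ofFn, List.getElem_map, List.getElem_range]
      rw [hgi]
  have hPne : P (2 * k) ≠ 0 := by
    have hιM : P (2 * k) = ExteriorAlgebra.ιMulti K (2 * k) (fun i : Fin (2 * k) => g i) := by
      rw [ExteriorAlgebra.ιMulti_apply]
      simp only [hP]
      congr 1
      apply List.ext_getElem
      · simp
      · intro i h1 h2
        simp
    set f : ∀ i : ℕ, ((Fin (2 * k) → K) [⋀^Fin i]→ₗ[K] K) :=
      fun i => if h : i = 2 * k then h ▸ Matrix.detRowAlternating else 0 with hf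
    intro hzero
    have h1 : ExteriorAlgebra.liftAlternating f (P (2 * k)) = 1 := by
      rw [hιM, ExteriorAlgebra.liftAlternating_apply_ιMulti]
      have hfval : f (2 * k) = Matrix.detRowAlternating := by
        simp [hf]
      rw [hfval]
      have hdet : Matrix.detRowAlternating (fun i : Fin (2 * k) => g i)
          = Matrix.det (Matrix.of fun i : Fin (2 * k) => g i) := rfl
      rw [hdet]
      have hone : (Matrix.of fun i : Fin (2 * k) => g i) = 1 := by
        ext i j
        simp [hg, Matrix.one_apply, Pi.single_apply, Fin.ext_iff, eq_comm,
          Nat.mod_eq_of_lt i.isLt]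
      rw [hone, Matrix.det_one]
    rw [hzero, map_zero] at h1
    exact zero_ne_one h1
  have hTne : (P (2 * k) ⊗ₜ[K] P (2 * k) : TensorProduct K E E) ≠ 0 := by
    obtain ⟨φ, hφ⟩ : ∃ φ : Module.Dual K E, φ (P (2 * k)) ≠ 0 := by
      by_contra hc
      push_neg at hc
      exact hPne ((Module.forall_dual_apply_eq_zero_iff K _).mp hc)
    intro h0
    have h1 := congrArg (TensorProduct.map φ φ) h0
    rw [TensorProduct.map_tmul, map_zero] at h1
    have h2 := congrArg (TensorProduct.lid K K) h1
    rw [map_zero, TensorProduct.lid_tmul] at h2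
    exact mul_ne_zero hφ hφ (by simpa [smul_eq_mul] using h2)
  have hne : ((2 : K) ^ (2 * k)) • (P (2 * k) ⊗ₜ[K] P (2 * k)) ≠ (0 : TensorProduct K E E) :=
    smul_ne_zero (pow_ne_zero _ (Ring.two_ne_zero hchar)) hTne
  refine ⟨by rw [hprod]; exact main, ?_, ?_⟩
  · rw [main]; exact hne
  · intro hsat
    have := hsat (x 0) (List.ofFn fun i : Fin (2 * k) => x i.succ) (by simp)
    rw [main] at this
    exact hne this
end

section
/- Let E_2 be the Grassmann algebra on a 2-dimensional vector space over a field K of characteristic ≠ 2, and let F_l = E_2 ⊗ ··· ⊗ E_2 (l factors). For any elements a_1,...,a_j ∈ F_l with 2 ≤ j ≤ l+1, if [a_1,...,a_j] ≠ 0 then [a_1,...,a_j] is a linear combination of pure tensors in which at least j−1 tensor positions equal e_1e_2 (up to scalar). -/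
/-- The left-normed commutator `[x_0, x_1, ..., x_n]` of `n+1` elements. -/
def lncFin {A : Type*} [Ring A] : {n : ℕ} → (Fin (n + 1) → A) → A
  | 0, x => x 0
  | n + 1, x => rcomm (lncFin fun i => x i.castSucc) (x (Fin.last (n + 1)))

namespace Stmt10Aux

variable (K : Type*) [Field K]

noncomputable def e1 : ExteriorAlgebra K (Fin 2 → K) := ExteriorAlgebra.ι K (Pi.single 0 1)
noncomputable def e2 : ExteriorAlgebra K (Fin 2 → K) := ExteriorAlgebra.ι K (Pi.single 1 1)

noncomputable def Z : Submodule K (ExteriorAlgebra K (Fin 2 → K)) :=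
  Submodule.span K {e1 K * e2 K}

lemma iota_eq (v : Fin 2 → K) :
    ExteriorAlgebra.ι K v = v 0 • e1 K + v 1 • e2 K := by
  rw [e1, e2, ← LinearMap.map_smul, ← LinearMap.map_smul, ← LinearMap.map_add]
  congr 1
  funext i
  fin_cases i <;> simp

lemma e11 : e1 K * e1 K = 0 := ExteriorAlgebra.ι_sq_zero _
lemma e22 : e2 K * e2 K = 0 := ExteriorAlgebra.ι_sq_zero _
lemma swap : e2 K * e1 K = -(e1 K * e2 K) :=
  eq_neg_of_add_eq_zero_left (ExteriorAlgebra.ι_add_mul_swap _ _)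

lemma z_mul_iota (v : Fin 2 → K) : (e1 K * e2 K) * ExteriorAlgebra.ι K v = 0 := by
  rw [iota_eq, mul_add, mul_smul_comm, mul_smul_comm, mul_assoc, mul_assoc, swap,
    mul_neg, ← mul_assoc, e11, e22, zero_mul, neg_zero, mul_zero, smul_zero, smul_zero, add_zero]

lemma iota_mul_z (v : Fin 2 → K) : ExteriorAlgebra.ι K v * (e1 K * e2 K) = 0 := by
  rw [iota_eq, add_mul, smul_mul_assoc, smul_mul_assoc, ← mul_assoc, ← mul_assoc, e11,
    swap, zero_mul, neg_mul, mul_assoc, e22, mul_zero, neg_zero, smul_zero, smul_zero, add_zero]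

lemma z_central (u : ExteriorAlgebra K (Fin 2 → K)) :
    (e1 K * e2 K) * u = u * (e1 K * e2 K) := by
  induction u using ExteriorAlgebra.induction with
  | algebraMap r => rw [Algebra.commutes]
  | ι v => rw [z_mul_iota, iota_mul_z]
  | mul a b ha hb => rw [← mul_assoc, ha, mul_assoc, hb, mul_assoc]
  | add a b ha hb => rw [mul_add, add_mul, ha, hb]

lemma mul_z_mem (u : ExteriorAlgebra K (Fin 2 → K)) : u * (e1 K * e2 K) ∈ Z K := by
  induction u using ExteriorAlgebra.induction with
  | algebraMap r =>
    rw [← Algebra.smul_def]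
    exact Submodule.smul_mem _ _ (Submodule.mem_span_singleton_self _)
  | ι v => rw [iota_mul_z]; exact zero_mem _
  | mul a b ha hb =>
    obtain ⟨r, hr⟩ := Submodule.mem_span_singleton.mp hb
    rw [mul_assoc, ← hr, mul_smul_comm]
    exact Submodule.smul_mem _ _ ha
  | add a b ha hb => rw [add_mul]; exact add_mem ha hb

lemma Z_mul_mem {u : ExteriorAlgebra K (Fin 2 → K)} (hu : u ∈ Z K)
    (v : ExteriorAlgebra K (Fin 2 → K)) : u * v ∈ Z K := by
  obtain ⟨r, hr⟩ := Submodule.mem_span_singleton.mp hu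
  rw [← hr, smul_mul_assoc, z_central]
  exact Submodule.smul_mem _ _ (mul_z_mem K v)

lemma mul_Z_mem {u : ExteriorAlgebra K (Fin 2 → K)} (hu : u ∈ Z K)
    (v : ExteriorAlgebra K (Fin 2 → K)) : v * u ∈ Z K := by
  obtain ⟨r, hr⟩ := Submodule.mem_span_singleton.mp hu
  rw [← hr, mul_smul_comm]
  exact Submodule.smul_mem _ _ (mul_z_mem K v)

lemma iota_mul_iota_mem (v w : Fin 2 → K) :
    ExteriorAlgebra.ι K v * ExteriorAlgebra.ι K w ∈ Z K := by
  rw [iota_eq K v, iota_eq K w, add_mul, mul_add, mul_add]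
  have h1 : e1 K * e2 K ∈ Z K := Submodule.mem_span_singleton_self _
  refine add_mem (add_mem ?_ ?_) (add_mem ?_ ?_) <;>
    rw [smul_mul_assoc, mul_smul_comm] <;>
    refine Submodule.smul_mem _ _ (Submodule.smul_mem _ _ ?_)
  · rw [e11]; exact zero_mem _
  · exact h1
  · rw [swap]; exact neg_mem h1
  · rw [e22]; exact zero_mem _

lemma comm_mem (u v : ExteriorAlgebra K (Fin 2 → K)) : u * v - v * u ∈ Z K := by
  induction u using ExteriorAlgebra.induction generalizing v with
  | algebraMap r => rw [Algebra.commutes, sub_self]; exact zero_mem _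
  | ι w =>
    induction v using ExteriorAlgebra.induction with
    | algebraMap r => rw [Algebra.commutes, sub_self]; exact zero_mem _
    | ι v' =>
      have h := eq_neg_of_add_eq_zero_left (ExteriorAlgebra.ι_add_mul_swap (R := K) v' w)
      rw [h, sub_neg_eq_add]
      exact add_mem (iota_mul_iota_mem K w v') (iota_mul_iota_mem K w v')
    | mul a b ha hb =>
      have : ExteriorAlgebra.ι K w * (a * b) - a * b * ExteriorAlgebra.ι K w =
          (ExteriorAlgebra.ι K w * a - a * ExteriorAlgebra.ι K w) * b +
            a * (ExteriorAlgebra.ι K w * b - b * ExteriorAlgebra.ι K w) := by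
        noncomm_ring
      rw [this]
      exact add_mem (Z_mul_mem K ha b) (mul_Z_mem K hb a)
    | add a b ha hb =>
      have : ExteriorAlgebra.ι K w * (a + b) - (a + b) * ExteriorAlgebra.ι K w =
          (ExteriorAlgebra.ι K w * a - a * ExteriorAlgebra.ι K w) +
            (ExteriorAlgebra.ι K w * b - b * ExteriorAlgebra.ι K w) := by noncomm_ring
      rw [this]; exact add_mem ha hb
  | mul a b ha hb =>
    have : a * b * v - v * (a * b) =
        a * (b * v - v * b) + (a * v - v * a) * b := by noncomm_ring
    rw [this]
    exact add_mem (mul_Z_mem K (hb v) a) (Z_mul_mem K (ha v) b)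
  | add a b ha hb =>
    have : (a + b) * v - v * (a + b) = (a * v - v * a) + (b * v - v * b) := by noncomm_ring
    rw [this]; exact add_mem (ha v) (hb v)


variable (l : ℕ)

noncomputable def Msub (n : ℕ) :
    Submodule K (PiTensorProduct K (fun _ : Fin l => ExteriorAlgebra K (Fin 2 → K))) :=
  Submodule.span K
    {x | ∃ m : Fin l → ExteriorAlgebra K (Fin 2 → K),
      x = PiTensorProduct.tprod K m ∧
        ∃ S : Finset (Fin l), n ≤ S.card ∧ ∀ i ∈ S, m i ∈ Submodule.span K {e1 K * e2 K}}

lemma Msub_zero_top : Msub K l 0 = ⊤ := by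
  rw [eq_top_iff, ← PiTensorProduct.span_tprod_eq_top]
  apply Submodule.span_mono
  rintro x ⟨m, rfl⟩
  exact ⟨m, rfl, ∅, Nat.zero_le _, fun i hi => absurd hi (Finset.notMem_empty i)⟩

lemma key_core (n : ℕ) (m m' : Fin l → ExteriorAlgebra K (Fin 2 → K))
    (S : Finset (Fin l)) (hS : n ≤ S.card)
    (hm : ∀ i ∈ S, m i ∈ Submodule.span K {e1 K * e2 K}) :
    (PiTensorProduct.tprod K m) * (PiTensorProduct.tprod K m')
      - (PiTensorProduct.tprod K m') * (PiTensorProduct.tprod K m) ∈ Msub K l (n + 1) := by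
  classical
  rw [PiTensorProduct.tprod_mul_tprod, PiTensorProduct.tprod_mul_tprod]
  set g : ℕ → Fin l → ExteriorAlgebra K (Fin 2 → K) :=
    fun k i => if (i : ℕ) < k then m' i * m i else m i * m' i with hg
  have h0 : m * m' = g 0 := by funext i; simp [hg]
  have hl : m' * m = g l := by funext i; simp [hg, i.isLt]
  have htel : (PiTensorProduct.tprod K (g 0) : PiTensorProduct K _)
      - PiTensorProduct.tprod K (g l)
      = ∑ k ∈ Finset.range l,
          ((PiTensorProduct.tprod K (g k) : PiTensorProduct K _)
            - PiTensorProduct.tprod K (g (k + 1))) :=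
    (Finset.sum_range_sub' (fun k => (PiTensorProduct.tprod K (g k) :
      PiTensorProduct K (fun _ : Fin l => ExteriorAlgebra K (Fin 2 → K)))) l).symm
  rw [h0, hl, htel]
  apply Submodule.sum_mem
  intro k hk
  have hkl : k < l := Finset.mem_range.mp hk
  set kf : Fin l := ⟨k, hkl⟩ with hkf
  have e_gk : g k = Function.update (g k) kf (m kf * m' kf) := by
    have : m kf * m' kf = g k kf := by simp [hg, hkf]
    rw [this, Function.update_eq_self]
  have e_gk1 : g (k + 1) = Function.update (g k) kf (m' kf * m kf) := by
    funext i
    rcases eq_or_ne i kf with rfl | h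
    · simp [hg, hkf]
    · have hik : (i : ℕ) ≠ k := fun hc => h (Fin.ext hc)
      rw [Function.update_of_ne h]
      simp only [hg]
      exact if_congr (by omega) rfl rfl
  have hdiff : (PiTensorProduct.tprod K (g k) : PiTensorProduct K _)
      - PiTensorProduct.tprod K (g (k + 1))
      = PiTensorProduct.tprod K
          (Function.update (g k) kf (m kf * m' kf - m' kf * m kf)) := by
    rw [MultilinearMap.map_update_sub, ← e_gk, ← e_gk1]
  rw [hdiff]
  by_cases hkS : kf ∈ S
  · obtain ⟨r, hr⟩ := Submodule.mem_span_singleton.mp (hm kf hkS)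
    have hzero : m kf * m' kf - m' kf * m kf = 0 := by
      rw [← hr, smul_mul_assoc, mul_smul_comm, z_central, sub_self]
    rw [hzero, MultilinearMap.map_update_zero]
    exact zero_mem _
  · apply Submodule.subset_span
    refine ⟨_, rfl, insert kf S, ?_, ?_⟩
    · rw [Finset.card_insert_of_notMem hkS]; omega
    · intro i hi
      rcases Finset.mem_insert.mp hi with rfl | hiS
      · rw [Function.update_self]
        exact comm_mem K _ _
      · have hne : i ≠ kf := fun hc => hkS (hc ▸ hiS)
        rw [Function.update_of_ne hne]
        simp only [hg]
        split_ifs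
        · exact mul_Z_mem K (hm i hiS) _
        · exact Z_mul_mem K (hm i hiS) _

lemma key (n : ℕ)
    (x : PiTensorProduct K (fun _ : Fin l => ExteriorAlgebra K (Fin 2 → K)))
    (hx : x ∈ Msub K l n)
    (y : PiTensorProduct K (fun _ : Fin l => ExteriorAlgebra K (Fin 2 → K))) :
    x * y - y * x ∈ Msub K l (n + 1) := by
  induction hx using Submodule.span_induction generalizing y with
  | mem x hxs =>
    obtain ⟨m, rfl, S, hS, hm⟩ := hxs
    have hy : y ∈ Submodule.span K
        (Set.range (PiTensorProduct.tprod K (s := fun _ : Fin l => ExteriorAlgebra K (Fin 2 → K)))) := by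
      rw [PiTensorProduct.span_tprod_eq_top]; trivial
    induction hy using Submodule.span_induction with
    | mem y hys =>
      obtain ⟨m', rfl⟩ := hys
      exact key_core K l n m m' S hS hm
    | zero => simp only [mul_zero, zero_mul, sub_zero, sub_self]; exact zero_mem (Msub K l (n + 1))
    | add a b ha hb iha ihb =>
      have : (PiTensorProduct.tprod K m : PiTensorProduct K _) * (a + b)
          - (a + b) * PiTensorProduct.tprod K m
          = ((PiTensorProduct.tprod K m : PiTensorProduct K _) * a
              - a * PiTensorProduct.tprod K m)
            + ((PiTensorProduct.tprod K m : PiTensorProduct K _) * b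
              - b * PiTensorProduct.tprod K m) := by noncomm_ring
      rw [this]; exact add_mem iha ihb
    | smul r a ha iha =>
      have : (PiTensorProduct.tprod K m : PiTensorProduct K _) * (r • a)
          - (r • a) * PiTensorProduct.tprod K m
          = r • ((PiTensorProduct.tprod K m : PiTensorProduct K _) * a
              - a * PiTensorProduct.tprod K m) := by
        rw [mul_smul_comm, smul_mul_assoc, smul_sub]
      rw [this]; exact Submodule.smul_mem _ _ iha
  | zero => simp only [mul_zero, zero_mul, sub_zero, sub_self]; exact zero_mem (Msub K l (n + 1))
  | add a b ha hb iha ihb =>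
    have : (a + b) * y - y * (a + b) = (a * y - y * a) + (b * y - y * b) := by noncomm_ring
    rw [this]; exact add_mem (iha y) (ihb y)
  | smul r a ha iha =>
    have : (r • a) * y - y * (r • a) = r • (a * y - y * a) := by
      rw [mul_smul_comm, smul_mul_assoc, smul_sub]
    rw [this]; exact Submodule.smul_mem _ _ (iha y)


lemma lnc_mem (n : ℕ)
    (a : Fin (n + 1) → PiTensorProduct K (fun _ : Fin l => ExteriorAlgebra K (Fin 2 → K))) :
    lncFin a ∈ Msub K l n := by
  induction n with
  | zero =>
    rw [Msub_zero_top]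
    trivial
  | succ n ih =>
    show rcomm _ _ ∈ _
    rw [rcomm]
    exact key K l n _ (ih _) _

end Stmt10Aux

/-- Let `F_l = E_2 ⊗ ⋯ ⊗ E_2` (`l` factors, char K ≠ 2). For `a_1, ..., a_j ∈ F_l` with
`2 ≤ j ≤ l+1` (here the number of entries is `j+1`, `1 ≤ j ≤ l`), if `[a_1,...,a_j] ≠ 0`
then `[a_1,...,a_j]` is a linear combination of pure tensors in which at least `j−1`
tensor positions equal `e_1e_2` up to scalar. -/
theorem stmt_10 (K : Type*) [Field K] (hchar : ringChar K ≠ 2) (l j : ℕ)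
    (hj : 1 ≤ j) (hjl : j ≤ l) :
    let E2 := ExteriorAlgebra K (Fin 2 → K)
    let e1 : E2 := ExteriorAlgebra.ι K (Pi.single 0 1)
    let e2 : E2 := ExteriorAlgebra.ι K (Pi.single 1 1)
    let F := PiTensorProduct K (fun _ : Fin l => E2)
    ∀ a : Fin (j + 1) → F, lncFin a ≠ 0 →
      lncFin a ∈ Submodule.span K
        {x : F | ∃ m : Fin l → E2, x = PiTensorProduct.tprod K m ∧
          ∃ S : Finset (Fin l), j ≤ S.card ∧
            ∀ i ∈ S, m i ∈ Submodule.span K {e1 * e2}} := by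
  intro E2 e1 e2 F a _
  exact Stmt10Aux.lnc_mem K l j a
end

section
/- Let E_2 be the Grassmann algebra on a 2-dimensional vector space over a field K of characteristic ≠ 2. Then the l-fold tensor product F_l = E_2 ⊗ ··· ⊗ E_2 satisfies the identity [x_1,...,x_{l+2}] = 0, i.e., F_l is Lie nilpotent of index at most l+1. -/
open ExteriorAlgebra

namespace Stmt11Aux

variable (K : Type*) [Field K]

local notation "E2" => ExteriorAlgebra K (Fin 2 → K)

noncomputable def Od : Submodule K E2 := LinearMap.range (ι K (M := Fin 2 → K))
noncomputable def Tt : Submodule K E2 := Od K * Od K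
noncomputable def Ev : Submodule K E2 := 1 ⊔ Tt K

theorem triple (u v w : Fin 2 → K) : ι K u * ι K v * ι K w = 0 := by
  set X : Fin 2 → E2 := fun i => ι K (Pi.single i 1) with hX
  have expand : ∀ z : Fin 2 → K, ι K z = z 0 • X 0 + z 1 • X 1 := by
    intro z
    rw [hX, ← map_smul, ← map_smul, ← map_add]
    congr 1
    funext j
    fin_cases j <;> simp
  have hsq : ∀ i, X i * X i = 0 := fun i => ι_sq_zero _
  have hsw : X 1 * X 0 = -(X 0 * X 1) :=
    eq_neg_of_add_eq_zero_right (by rw [add_comm]; exact ι_add_mul_swap _ _)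
  have h3 : ∀ a b c : Fin 2, X a * X b * X c = 0 := by
    intro a b c
    fin_cases a <;> fin_cases b <;> fin_cases c
    · show X 0 * X 0 * X 0 = 0; rw [hsq, zero_mul]
    · show X 0 * X 0 * X 1 = 0; rw [hsq, zero_mul]
    · show X 0 * X 1 * X 0 = 0
      rw [mul_assoc, hsw, mul_neg, ← mul_assoc, hsq, zero_mul, neg_zero]
    · show X 0 * X 1 * X 1 = 0; rw [mul_assoc, hsq, mul_zero]
    · show X 1 * X 0 * X 0 = 0; rw [mul_assoc, hsq, mul_zero]
    · show X 1 * X 0 * X 1 = 0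
      rw [hsw, neg_mul, mul_assoc, hsq, mul_zero, neg_zero]
    · show X 1 * X 1 * X 0 = 0; rw [hsq, zero_mul]
    · show X 1 * X 1 * X 1 = 0; rw [hsq, zero_mul]
  rw [expand u, expand v, expand w]
  simp only [add_mul, mul_add, smul_mul_assoc, mul_smul_comm, h3, smul_zero, add_zero]

theorem od_anticomm {a b : E2} (ha : a ∈ Od K) (hb : b ∈ Od K) :
    b * a = -(a * b) := by
  obtain ⟨u, rfl⟩ := ha
  obtain ⟨v, rfl⟩ := hb
  exact eq_neg_of_add_eq_zero_right (by rw [add_comm]; exact ι_add_mul_swap _ _)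

theorem tt_central {t : E2} (ht : t ∈ Tt K) (x : E2) : t * x = x * t := by
  refine Submodule.mul_induction_on (C := fun y => y * x = x * y) ht ?_ ?_
  · rintro _ ⟨u, rfl⟩ _ ⟨v, rfl⟩
    induction x using ExteriorAlgebra.induction with
    | algebraMap r => rw [Algebra.commutes]
    | ι w => rw [triple, ← mul_assoc, triple]
    | mul a b hla hlb => rw [← mul_assoc, hla, mul_assoc, hlb, ← mul_assoc]
    | add a b hla hlb => rw [mul_add, add_mul, hla, hlb]
  · intro a b hla hlb; rw [add_mul, mul_add, hla, hlb]

theorem tt_mul (x : E2) : ∀ t ∈ Tt K, t * x ∈ Tt K := by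
  induction x using ExteriorAlgebra.induction with
  | algebraMap r =>
    intro t ht
    rw [← Algebra.commutes, ← Algebra.smul_def]
    exact Submodule.smul_mem _ _ ht
  | ι w =>
    intro t ht
    refine Submodule.mul_induction_on (C := fun y => y * ι K w ∈ Tt K) ht ?_ ?_
    · rintro _ ⟨u, rfl⟩ _ ⟨v, rfl⟩
      rw [triple]
      exact Submodule.zero_mem _
    · intro a b hla hlb; rw [add_mul]; exact Submodule.add_mem _ hla hlb
  | mul a b hla hlb =>
    intro t ht
    rw [← mul_assoc]
    exact hlb _ (hla t ht)
  | add a b hla hlb =>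
    intro t ht
    rw [mul_add]
    exact Submodule.add_mem _ (hla t ht) (hlb t ht)

theorem tt_mul_od {t b : E2} (ht : t ∈ Tt K) (hb : b ∈ Od K) : t * b = 0 := by
  obtain ⟨w, rfl⟩ := hb
  refine Submodule.mul_induction_on (C := fun y => y * ι K w = 0) ht ?_ ?_
  · rintro _ ⟨u, rfl⟩ _ ⟨v, rfl⟩
    exact triple K u v w
  · intro a b hla hlb; rw [add_mul, hla, hlb, add_zero]

theorem ev_decomp {a : E2} (ha : a ∈ Ev K) :
    ∃ r : K, ∃ t ∈ Tt K, a = algebraMap K E2 r + t := by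
  obtain ⟨y, hy, t, ht, rfl⟩ := Submodule.mem_sup.mp ha
  obtain ⟨r, rfl⟩ := Submodule.mem_one.mp hy
  exact ⟨r, t, ht, rfl⟩

theorem ev_central {a : E2} (ha : a ∈ Ev K) (x : E2) : a * x = x * a := by
  obtain ⟨r, t, ht, rfl⟩ := ev_decomp K ha
  rw [add_mul, mul_add, Algebra.commutes, tt_central K ht]

theorem ev_mul_ev {a b : E2} (ha : a ∈ Ev K) (hb : b ∈ Ev K) : a * b ∈ Ev K := by
  obtain ⟨r, t, ht, rfl⟩ := ev_decomp K ha
  rw [add_mul, ← Algebra.smul_def]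
  exact Submodule.add_mem _ (Submodule.smul_mem _ _ hb)
    (Submodule.mem_sup_right (tt_mul K b t ht))

theorem ev_mul_od {a b : E2} (ha : a ∈ Ev K) (hb : b ∈ Od K) : a * b ∈ Od K := by
  obtain ⟨r, t, ht, rfl⟩ := ev_decomp K ha
  rw [add_mul, ← Algebra.smul_def, tt_mul_od K ht hb, add_zero]
  exact Submodule.smul_mem _ _ hb

theorem ev_sup_od : Ev K ⊔ Od K = ⊤ := by
  rw [eq_top_iff]
  intro x _
  clear ‹x ∈ ⊤›
  induction x using ExteriorAlgebra.induction with
  | algebraMap r =>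
    exact Submodule.mem_sup_left (Submodule.mem_sup_left (Submodule.algebraMap_mem r))
  | ι w => exact Submodule.mem_sup_right (LinearMap.mem_range_self _ _)
  | mul a b hla hlb =>
    obtain ⟨ae, hae, ao, hao, rfl⟩ := Submodule.mem_sup.mp hla
    obtain ⟨be, hbe, bo, hbo, rfl⟩ := Submodule.mem_sup.mp hlb
    rw [add_mul, mul_add, mul_add]
    refine Submodule.add_mem _ (Submodule.add_mem _ ?_ ?_) (Submodule.add_mem _ ?_ ?_)
    · exact Submodule.mem_sup_left (ev_mul_ev K hae hbe)
    · exact Submodule.mem_sup_right (ev_mul_od K hae hbo)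
    · rw [← ev_central K hbe]
      exact Submodule.mem_sup_right (ev_mul_od K hbe hao)
    · exact Submodule.mem_sup_left (Submodule.mem_sup_right (Submodule.mul_mem_mul hao hbo))
  | add a b hla hlb => exact Submodule.add_mem _ hla hlb

/-- The three "types" of elements: 0 = even (central), 1 = odd, 2 = top degree. -/
noncomputable def Sub : Fin 3 → Submodule K E2 :=
  fun s => if s = 0 then Ev K else if s = 1 then Od K else Tt K

/-- Multiplication table on types. -/
def mulTy (s t : Fin 3) : Fin 3 :=
  if s = 2 ∨ t = 2 then 2 else if s = 1 ∧ t = 1 then 2 else if s = 1 ∨ t = 1 then 1 else 0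

theorem tt_le_ev : Tt K ≤ Ev K := le_sup_right

theorem sub_mul_mem {s t : Fin 3} {a b : E2} (ha : a ∈ Sub K s) (hb : b ∈ Sub K t) :
    a * b ∈ Sub K (mulTy s t) := by
  fin_cases s <;> fin_cases t <;>
    simp only [Sub, mulTy] at ha hb ⊢ <;> norm_num at ha hb ⊢
  · exact ev_mul_ev K ha hb
  · exact ev_mul_od K ha hb
  · rw [ev_central K ha]; exact tt_mul K a b hb
  · rw [← ev_central K hb]; exact ev_mul_od K hb ha
  · exact Submodule.mul_mem_mul ha hb
  · rw [← tt_central K hb]; exact tt_mul K a b hb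
  · exact tt_mul K b a ha
  · exact tt_mul K b a ha
  · exact tt_mul K b a ha

/-- Sign picked up when swapping elements of the given types. -/
def epsK (s t : Fin 3) : K := if s = 1 ∧ t = 1 then -1 else 1

theorem sub_comm {s t : Fin 3} {a b : E2} (ha : a ∈ Sub K s) (hb : b ∈ Sub K t) :
    b * a = epsK K s t • (a * b) := by
  by_cases h : s = 1 ∧ t = 1
  · obtain ⟨rfl, rfl⟩ := h
    have ha' : a ∈ Od K := by simpa [Sub] using ha
    have hb' : b ∈ Od K := by simpa [Sub] using hb
    rw [od_anticomm K ha' hb',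
      show epsK K 1 1 = -1 from by norm_num [epsK], neg_smul, one_smul]
  · rw [epsK, if_neg h, one_smul]
    rcases not_and_or.mp h with hs | hs
    · have haev : a ∈ Ev K := by
        fin_cases s <;> simp only [Sub] at ha <;> norm_num at ha ⊢
        · exact ha
        · exact absurd rfl hs
        · exact tt_le_ev K ha
      rw [ev_central K haev]
    · have hbev : b ∈ Ev K := by
        fin_cases t <;> simp only [Sub] at hb <;> norm_num at hb ⊢
        · exact hb
        · exact absurd rfl hs
        · exact tt_le_ev K hb
      rw [← ev_central K hbev]

theorem mulTy_left_two {s t : Fin 3} (hs : s = 2) : mulTy s t = 2 := by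
  rw [mulTy, if_pos (Or.inl hs)]

theorem mulTy_one_one : mulTy 1 1 = 2 := by decide


theorem sub_zero_eq : Sub K 0 = Ev K := by norm_num [Sub]

theorem sub_one_eq : Sub K 1 = Od K := by norm_num [Sub]

section Tensor

open PiTensorProduct

variable (l : ℕ)

/-- Number of slots of type `2` (top degree). -/
def cnt {l : ℕ} (σ : Fin l → Fin 3) : ℕ := (Finset.univ.filter fun i => σ i = 2).card

/-- Submodule of the tensor product spanned by typed pure tensors with at least `m`
slots of top-degree type. -/
noncomputable def G (m : ℕ) : Submodule K (PiTensorProduct K (fun _ : Fin l => E2)) :=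
  Submodule.span K {x | ∃ σ : Fin l → Fin 3, m ≤ cnt σ ∧ ∃ v : Fin l → E2,
    (∀ i, v i ∈ Sub K (σ i)) ∧ x = tprod K v}

theorem G_antitone {m m' : ℕ} (h : m ≤ m') : G K l m' ≤ G K l m :=
  Submodule.span_mono fun x hx => by
    obtain ⟨σ, hσ, hv⟩ := hx
    exact ⟨σ, le_trans h hσ, hv⟩

theorem G_zero : G K l 0 = ⊤ := by
  classical
  rw [eq_top_iff, ← span_tprod_eq_top]
  rw [Submodule.span_le]
  rintro _ ⟨v, rfl⟩
  have h : ∀ i, ∃ ae ∈ Ev K, ∃ ao ∈ Od K, ae + ao = v i := fun i =>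
    Submodule.mem_sup.mp (by rw [ev_sup_od]; exact Submodule.mem_top)
  choose a ha b hb hab using h
  have hv : v = a + b := funext fun i => (hab i).symm
  rw [hv, MultilinearMap.map_add_univ]
  refine Submodule.sum_mem _ fun s _ => Submodule.subset_span ?_
  refine ⟨fun i => if i ∈ s then 0 else 1, Nat.zero_le _, s.piecewise a b, fun i => ?_, rfl⟩
  by_cases hi : i ∈ s
  · simpa only [Finset.piecewise_eq_of_mem _ _ _ hi, if_pos hi, sub_zero_eq] using ha i
  · simpa only [Finset.piecewise_eq_of_notMem _ _ _ hi, if_neg hi, sub_one_eq] using hb i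

theorem core (σ τ : Fin l → Fin 3) (v w : Fin l → E2)
    (hv : ∀ i, v i ∈ Sub K (σ i)) (hw : ∀ i, w i ∈ Sub K (τ i)) :
    rcomm (tprod K v) (tprod K w) ∈ G K l (cnt σ + 1) := by
  classical
  have hswap : tprod K w * tprod K v =
      (∏ i, epsK K (σ i) (τ i)) • tprod K (v * w) := by
    rw [tprod_mul_tprod]
    have hwv : (w * v) = fun i => epsK K (σ i) (τ i) • ((v * w) i) :=
      funext fun i => sub_comm K (hv i) (hw i)
    rw [hwv, MultilinearMap.map_smul_univ]
  rw [rcomm, tprod_mul_tprod, hswap]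
  have hfact : tprod K (v * w) - (∏ i, epsK K (σ i) (τ i)) • tprod K (v * w) =
      (1 - ∏ i, epsK K (σ i) (τ i)) • tprod K (v * w) := by
    rw [sub_smul, one_smul]
  rw [hfact]
  by_cases h : ∃ i, σ i = 1 ∧ τ i = 1
  · refine Submodule.smul_mem _ _ (Submodule.subset_span ?_)
    obtain ⟨i0, h1, h2⟩ := h
    refine ⟨fun i => mulTy (σ i) (τ i), ?_, v * w,
      fun i => sub_mul_mem K (hv i) (hw i), rfl⟩
    have hnm : i0 ∉ Finset.univ.filter fun i => σ i = 2 := by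
      intro hmem
      rw [Finset.mem_filter, h1] at hmem
      exact absurd hmem.2 (by decide)
    have hsub : insert i0 (Finset.univ.filter fun i => σ i = 2) ⊆
        Finset.univ.filter fun i => mulTy (σ i) (τ i) = 2 := by
      intro j hj
      rcases Finset.mem_insert.mp hj with rfl | hj
      · refine Finset.mem_filter.mpr ⟨Finset.mem_univ _, ?_⟩
        rw [h1, h2]
        decide
      · exact Finset.mem_filter.mpr ⟨Finset.mem_univ _,
          mulTy_left_two (Finset.mem_filter.mp hj).2⟩
    calc cnt σ + 1 = (insert i0 (Finset.univ.filter fun i => σ i = 2)).card :=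
          (Finset.card_insert_of_notMem hnm).symm
      _ ≤ _ := Finset.card_le_card hsub
  · have heps : ∀ i, epsK K (σ i) (τ i) = 1 := fun i => if_neg fun hc => h ⟨i, hc⟩
    rw [show (∏ i, epsK K (σ i) (τ i)) = 1 by simp [heps], sub_self, zero_smul]
    exact Submodule.zero_mem _

theorem comm_mem {m : ℕ} {x : PiTensorProduct K (fun _ : Fin l => E2)} (hx : x ∈ G K l m)
    (y : PiTensorProduct K (fun _ : Fin l => E2)) : rcomm x y ∈ G K l (m + 1) := by
  induction hx using Submodule.span_induction generalizing y with
  | mem x hxs =>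
    obtain ⟨σ, hσ, v, hv, rfl⟩ := hxs
    have hy : y ∈ G K l 0 := by rw [G_zero]; exact Submodule.mem_top
    induction hy using Submodule.span_induction with
    | mem y hys =>
      obtain ⟨τ, _, w, hw, rfl⟩ := hys
      exact G_antitone K l (Nat.add_le_add_right hσ 1) (core K l σ τ v w hv hw)
    | zero => simpa [rcomm] using Submodule.zero_mem _
    | add y z hy hz hpy hpz =>
      have : rcomm (tprod K v) (y + z) = rcomm (tprod K v) y + rcomm (tprod K v) z := by
        simp [rcomm, mul_add, add_mul]; abel
      rw [this]
      exact Submodule.add_mem _ hpy hpz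
    | smul c y hy hpy =>
      have : rcomm (tprod K v) (c • y) = c • rcomm (tprod K v) y := by
        simp [rcomm, mul_smul_comm, smul_mul_assoc, smul_sub]
      rw [this]
      exact Submodule.smul_mem _ _ hpy
  | zero => simpa [rcomm] using Submodule.zero_mem _
  | add x z hx hz hpx hpz =>
    have : rcomm (x + z) y = rcomm x y + rcomm z y := by
      simp [rcomm, mul_add, add_mul]; abel
    rw [this]
    exact Submodule.add_mem _ (hpx y) (hpz y)
  | smul c x hx hpx =>
    have : rcomm (c • x) y = c • rcomm x y := by
      simp [rcomm, mul_smul_comm, smul_mul_assoc, smul_sub]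
    rw [this]
    exact Submodule.smul_mem _ _ (hpx y)

theorem lnc_mem : ∀ (n : ℕ) (x : Fin (n + 1) → PiTensorProduct K (fun _ : Fin l => E2)),
    lncFin x ∈ G K l n := by
  intro n
  induction n with
  | zero =>
    intro x
    rw [G_zero]
    exact Submodule.mem_top
  | succ n ih =>
    intro x
    exact comm_mem K l (ih fun i => x i.castSucc) (x (Fin.last (n + 1)))

theorem G_top_bot : G K l (l + 1) = ⊥ := by
  rw [G, show {x : PiTensorProduct K (fun _ : Fin l => E2) | ∃ σ : Fin l → Fin 3, l + 1 ≤ cnt σ ∧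
      ∃ v : Fin l → E2, (∀ i, v i ∈ Sub K (σ i)) ∧ x = tprod K v} = ∅ from ?_,
    Submodule.span_empty]
  rw [Set.eq_empty_iff_forall_notMem]
  rintro x ⟨σ, hσ, -⟩
  have : cnt σ ≤ l := le_trans (Finset.card_filter_le _ _) (by simp)
  omega

end Tensor

end Stmt11Aux

/-- The `l`-fold tensor product `F_l = E_2 ⊗ ⋯ ⊗ E_2` (char K ≠ 2) satisfies the identity
`[x_1, ..., x_{l+2}] = 0`, i.e. it is Lie nilpotent of index at most `l+1`. -/
theorem stmt_11 (K : Type*) [Field K] (hchar : ringChar K ≠ 2) (l : ℕ) :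
    let E2 := ExteriorAlgebra K (Fin 2 → K)
    let F := PiTensorProduct K (fun _ : Fin l => E2)
    ∀ x : Fin (l + 2) → F, lncFin x = 0 := by
  intro E2 F x
  have h := Stmt11Aux.lnc_mem K l (l + 1) x
  rw [Stmt11Aux.G_top_bot] at h
  simpa using h
end
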